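/- arXiv:1401.1874 — 2 statements merged into one kernel-verified Lean document; each statement's English description precedes it below -/
import Mathlib

section
/- Let the polynomials {Q_k}_{k=0}^{n-1} and auxiliary polynomials {G_k}_{k=0}^{n-1} over ℂ satisfy Szegő-type (semiseparable) two-term recurrence relations with coefficients α_k, β_k, γ_k, δ_k, θ_k, assume G₀ = Q₀, and set β₀ = 1. Then for every k = 1, …, n−1: Q_k(x) = (δ_k·x + θ_k + γ_k·β_{k-1})·Q_{k-1}(x) + Σ_{j=0}^{k-2} γ_k·β_j·(∏_{i=j+1}^{k-1} (α_i − β_i·γ_i))·Q_j(x). Equivalently, Q satisfies general recurrence relations with τ_k = δ_k, a_{k-1,k} = −(θ_k + γ_k·β_{k-1}), and a_{j,k} = −β_j·(∏_{i=j+1}^{k-1} (α_i − β_i·γ_i))·γ_k for j < k−1. -/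
/-!
Substituting `β_k (δ_k x + θ_k) Q_{k-1} = β_k (Q_k - γ_k G_{k-1})` into the recurrence for `G_k`
eliminates the linear factor: `G_k = (α_k - β_k γ_k) G_{k-1} + β_k Q_k`. This first-order linear
recurrence unrolls to `G_m = ∑_{j ≤ m} β_j (∏_{i=j+1}^{m} (α_i - β_i γ_i)) Q_j`, and inserting
this for `G_{k-1}` into the recurrence for `Q_k` gives the claimed formula.
-/

open Polynomial Finset

theorem eq_sum_smul_of_eq_smul_add_smul {R M : Type*} [CommSemiring R] [AddCommMonoid M]
    [Module R M] (a b : ℕ → R) (G Q : ℕ → M) (m : ℕ) (h0 : G 0 = b 0 • Q 0)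
    (hsucc : ∀ k < m, G (k + 1) = a (k + 1) • G k + b (k + 1) • Q (k + 1)) :
    G m = ∑ j ∈ range (m + 1), (b j * ∏ i ∈ Ico (j + 1) (m + 1), a i) • Q j := by
  induction m with
  | zero => simpa using h0
  | succ m ih =>
    rw [hsucc m m.lt_succ_self, ih fun k hk => hsucc k (by omega), sum_range_succ _ (m + 1),
      smul_sum, Ico_self, prod_empty, mul_one]
    congr 1
    refine sum_congr rfl fun j hj => ?_
    rw [prod_Ico_succ_top (b := m + 1) (by rw [mem_range] at hj; omega), smul_smul]
    congr 1
    ring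

/-- semiseparable polynomials satisfying Szegő-type two-term
recurrence relations (with auxiliary polynomials `G`, `G 0 = Q 0`, `β 0 = 1`)
satisfy the general recurrence relations
`Q k = (δ k • x + θ k + γ k β (k-1)) * Q (k-1)
      + ∑_{j=0}^{k-2} γ k β j (∏_{i=j+1}^{k-1} (α i - β i γ i)) * Q j`,
i.e. with `τ k = δ k`, `a (k-1) k = -(θ k + γ k β (k-1))`, and
`a j k = -β j (∏_{i=j+1}^{k-1} (α i - β i γ i)) γ k` for `j < k - 1`. -/
theorem szego_to_general_recurrence (n : ℕ) (α β γ δ θ : ℕ → ℂ)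
    (Q G : ℕ → Polynomial ℂ)
    (hG0 : G 0 = Q 0) (hβ0 : β 0 = 1)
    (hrec : ∀ k, 1 ≤ k → k ≤ n - 1 →
      G k = C (α k) * G (k - 1) + C (β k) * (C (δ k) * X + C (θ k)) * Q (k - 1) ∧
      Q k = C (γ k) * G (k - 1) + (C (δ k) * X + C (θ k)) * Q (k - 1)) :
    ∀ k, 1 ≤ k → k ≤ n - 1 →
      Q k = (C (δ k) * X + C (θ k + γ k * β (k - 1))) * Q (k - 1)
        + ∑ j ∈ Finset.range (k - 1),
            C (γ k * β j * (∏ i ∈ Finset.Ico (j + 1) k, (α i - β i * γ i))) * Q j := by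
  have hG : ∀ m ≤ n - 1, G m = ∑ j ∈ range (m + 1),
      (β j * ∏ i ∈ Ico (j + 1) (m + 1), (α i - β i * γ i)) • Q j := by
    intro m hm
    refine eq_sum_smul_of_eq_smul_add_smul _ β G Q m (by rw [hG0, hβ0, one_smul]) fun k hk => ?_
    obtain ⟨hGk, hQk⟩ := hrec (k + 1) (by omega) (by omega)
    simp only [Nat.add_sub_cancel, smul_eq_C_mul, map_sub, map_mul] at hGk hQk ⊢
    linear_combination hGk - C (β (k + 1)) * hQk
  intro k hk1 hkn
  obtain ⟨m, rfl⟩ : ∃ m, k = m + 1 := ⟨k - 1, by omega⟩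
  obtain ⟨-, hQ⟩ := hrec (m + 1) hk1 hkn
  simp only [Nat.add_sub_cancel] at hQ ⊢
  rw [hQ, hG m (by omega), sum_range_succ, Ico_self, prod_empty, mul_one, mul_add, mul_sum]
  simp only [smul_eq_C_mul, map_add, map_mul, ← mul_assoc]
  ring
end

section
/- Let n ≥ 1 and α_i, β_i, γ_i, δ_i, t_j ∈ ℂ with all α_i ≠ 0 and conventions α₀ = 1, β₁ = 0, where t_j = δ_j + β_j/α_{j-1}. Define the row vectors g_j = (t_j, t_j·β_{j+1}/α_j + γ_{j+1}) ∈ ℂ^{1×2} for j = 1, …, n−1, the 2×2 matrices b_i = [[0, 0], [1, β_{i+1}/α_i]] for i = 2, …, n−1, and the column vector h = (1, 0)ᵀ. Then for all indices with 1 ≤ j and j+1 < k ≤ n: g_j·b_{j+1}·b_{j+2}⋯b_{k-1}·h = (α_{k-1}/α_{j+1})·(((δ_j/α_j) + β_j/(α_{j-1}·α_j))·β_{j+1} + γ_{j+1})·∏_{i=j+1}^{k-2} (β_{i+1}/α_{i+1}). Consequently, the unit upper triangular n×n matrix with superdiagonal entries t_j and (j,k) entries equal to the right-hand side for k > j+1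 is upper triangular 2-quasiseparable with these generators. -/
/-!
Each `b_i = [[0,0],[1,c_i]]` sends `e₁ ↦ e₂` and `e₂ ↦ c_i e₂`, so `b_{j+1} ⋯ b_{k-1} e₁` is
`e₂` scaled by `c_{j+1} ⋯ c_{k-2}`, and the generator product is `g_j`'s second entry times that
product. With `c_i = β_{i+1}/α_i`, the product telescopes against the `α`'s into
`(α_{k-1}/α_{j+1}) ∏ β_{i+1}/α_{i+1}`, and the second entry of `g_j` expands to the stated
coefficient.
-/

open Matrix Finset

/-- Ordered product `b a * b (a+1) * ⋯ * b (k-1)` of `2 × 2` matrices. -/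
noncomputable def genProd (b : ℕ → Matrix (Fin 2) (Fin 2) ℂ) (a k : ℕ) :
    Matrix (Fin 2) (Fin 2) ℂ :=
  ((List.range (k - a)).map (fun m => b (a + m))).prod

lemma genProd_self (b : ℕ → Matrix (Fin 2) (Fin 2) ℂ) (a : ℕ) : genProd b a a = 1 := by
  simp [genProd]

lemma genProd_eq_mul_genProd_succ (b : ℕ → Matrix (Fin 2) (Fin 2) ℂ) {a k : ℕ} (h : a < k) :
    genProd b a k = b a * genProd b (a + 1) k := by
  obtain ⟨d, rfl⟩ : ∃ d, k = a + 1 + d := ⟨k - (a + 1), by omega⟩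
  simp only [genProd, show a + 1 + d - a = d + 1 by omega, Nat.add_sub_cancel_left,
    List.range_succ_eq_map, List.map_cons, List.prod_cons, List.map_map, Nat.add_zero]
  congr 3
  funext m
  simp only [Function.comp_apply, Nat.succ_eq_add_one, Nat.add_assoc, Nat.add_comm 1 m]

lemma genProd_mulVec_vecCons_one_zero (c : ℕ → ℂ) (b : ℕ → Matrix (Fin 2) (Fin 2) ℂ)
    (hb : ∀ i, b i = !![0, 0; 1, c i]) {a k : ℕ} (hak : a < k) :
    genProd b a k *ᵥ ![1, 0] = ![0, ∏ m ∈ Ico a (k - 1), c m] := by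
  obtain ⟨d, rfl⟩ : ∃ d, k = a + d + 1 := ⟨k - a - 1, by omega⟩
  induction d generalizing a with
  | zero =>
    rw [genProd_eq_mul_genProd_succ b hak, genProd_self]
    ext i
    fin_cases i <;> simp [hb]
  | succ d ih =>
    rw [genProd_eq_mul_genProd_succ b hak, ← mulVec_mulVec,
      show a + (d + 1) + 1 = a + 1 + d + 1 by omega, ih (by omega),
      prod_eq_prod_Ico_succ_bot (by omega : a < a + 1 + d + 1 - 1)]
    ext i
    fin_cases i <;> simp [hb, mul_comm]

lemma prod_Ico_div_shift (x α : ℕ → ℂ) (hα : ∀ i, α i ≠ 0) {a m : ℕ} (ham : a ≤ m) :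
    ∏ i ∈ Ico a m, x (i + 1) / α i = α m / α a * ∏ i ∈ Ico a m, x (i + 1) / α (i + 1) := by
  induction m, ham using Nat.le_induction with
  | base => simp [hα a]
  | succ m ham ih =>
    rw [prod_Ico_succ_top ham, prod_Ico_succ_top ham, ih]
    field_simp [hα m, hα (m + 1)]

lemma wellfree_generator_product (t α β γ δ : ℕ → ℂ) (hα : ∀ i, α i ≠ 0)
    (ht : ∀ j, t j = δ j + β j / α (j - 1)) {j k : ℕ} (hjk : j + 1 < k) :
    ![t j, t j * β (j + 1) / α j + γ (j + 1)] ⬝ᵥ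
        (genProd (fun i => !![0, 0; 1, β (i + 1) / α i]) (j + 1) k *ᵥ ![1, 0])
      = (α (k - 1) / α (j + 1)) *
          ((δ j / α j + β j / (α (j - 1) * α j)) * β (j + 1) + γ (j + 1)) *
          ∏ i ∈ Ico (j + 1) (k - 1), (β (i + 1) / α (i + 1)) := by
  rw [genProd_mulVec_vecCons_one_zero (fun i => β (i + 1) / α i) _ (fun _ => rfl) (by omega),
    prod_Ico_div_shift β α hα (by omega : j + 1 ≤ k - 1), ht]
  simp only [dotProduct, Fin.sum_univ_two, cons_val_zero, cons_val_one, mul_zero, zero_add]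
  ring

theorem wellfree_generators_M_general (n : ℕ) (t α β γ δ : ℕ → ℂ)
    (hα : ∀ i, α i ≠ 0)
    (ht : ∀ j, t j = δ j + β j / α (j - 1))
    (g : ℕ → Fin 2 → ℂ)
    (hg : ∀ j, g j = ![t j, t j * β (j + 1) / α j + γ (j + 1)])
    (b : ℕ → Matrix (Fin 2) (Fin 2) ℂ)
    (hb : ∀ i, b i = !![0, 0; 1, β (i + 1) / α i])
    (hvec : Fin 2 → ℂ) (hh : hvec = ![1, 0])
    (M : Matrix (Fin n) (Fin n) ℂ)
    (hM : ∀ i j : Fin n, M i j =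
      if (j : ℕ) < (i : ℕ) then 0
      else if (j : ℕ) = (i : ℕ) then 1
      else if (j : ℕ) = (i : ℕ) + 1 then t ((i : ℕ) + 1)
      else (α (j : ℕ) / α ((i : ℕ) + 2)) *
        ((δ ((i : ℕ) + 1) / α ((i : ℕ) + 1)
            + β ((i : ℕ) + 1) / (α (i : ℕ) * α ((i : ℕ) + 1))) * β ((i : ℕ) + 2)
          + γ ((i : ℕ) + 2)) *
        ∏ m ∈ Finset.Ico ((i : ℕ) + 2) (j : ℕ), (β (m + 1) / α (m + 1))) :
    (∀ j k : ℕ, 1 ≤ j → j + 1 < k → k ≤ n →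
      g j ⬝ᵥ (genProd b (j + 1) k).mulVec hvec
        = (α (k - 1) / α (j + 1)) *
            ((δ j / α j + β j / (α (j - 1) * α j)) * β (j + 1) + γ (j + 1)) *
            ∏ i ∈ Finset.Ico (j + 1) (k - 1), (β (i + 1) / α (i + 1))) ∧
    (∀ i j : Fin n, (i : ℕ) + 1 < (j : ℕ) →
      M i j = g ((i : ℕ) + 1) ⬝ᵥ (genProd b ((i : ℕ) + 2) ((j : ℕ) + 1)).mulVec hvec) ∧
    (∀ i j : Fin n, (j : ℕ) = (i : ℕ) + 1 →
      M i j = g ((i : ℕ) + 1) ⬝ᵥ hvec) := by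
  obtain rfl : g = _ := funext hg
  obtain rfl : b = _ := funext hb
  subst hh
  refine ⟨fun j k _ hjk _ => wellfree_generator_product t α β γ δ hα ht hjk, ?_, ?_⟩
  · intro i j hij
    rw [hM, if_neg (by omega), if_neg (by omega), if_neg (by omega),
      wellfree_generator_product t α β γ δ hα ht (by omega)]
    simp
  · intro i j hij
    rw [hM, if_neg (by omega), if_neg (by omega), if_pos hij]
    simp

/-- the well-free generators
`g_j = (t_j, t_j β_{j+1}/α_j + γ_{j+1})`, `b_i = [[0,0],[1, β_{i+1}/α_i]]`,
`h = (1,0)ᵀ`, with `t_j = δ_j + β_j/α_{j-1}`, all `α_i ≠ 0`, `α 0 = 1`,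
`β 1 = 0`, satisfy
`g_j b_{j+1} ⋯ b_{k-1} h
  = (α_{k-1}/α_{j+1}) ((δ_j/α_j + β_j/(α_{j-1} α_j)) β_{j+1} + γ_{j+1})
      ∏_{i=j+1}^{k-2} (β_{i+1}/α_{i+1})`
for `1 ≤ j`, `j+1 < k ≤ n`; consequently the corresponding unit upper
triangular matrix `M` is 2-quasiseparable with these generators. -/
theorem wellfree_generators_M (n : ℕ) (hn : 1 ≤ n) (t α β γ δ : ℕ → ℂ)
    (hα : ∀ i, α i ≠ 0) (hα0 : α 0 = 1) (hβ1 : β 1 = 0)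
    (ht : ∀ j, t j = δ j + β j / α (j - 1))
    (g : ℕ → Fin 2 → ℂ)
    (hg : ∀ j, g j = ![t j, t j * β (j + 1) / α j + γ (j + 1)])
    (b : ℕ → Matrix (Fin 2) (Fin 2) ℂ)
    (hb : ∀ i, b i = !![0, 0; 1, β (i + 1) / α i])
    (hvec : Fin 2 → ℂ) (hh : hvec = ![1, 0])
    (M : Matrix (Fin n) (Fin n) ℂ)
    (hM : ∀ i j : Fin n, M i j =
      if (j : ℕ) < (i : ℕ) then 0
      else if (j : ℕ) = (i : ℕ) then 1
      else if (j : ℕ) = (i : ℕ) + 1 then t ((i : ℕ) + 1)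
      else (α (j : ℕ) / α ((i : ℕ) + 2)) *
        ((δ ((i : ℕ) + 1) / α ((i : ℕ) + 1)
            + β ((i : ℕ) + 1) / (α (i : ℕ) * α ((i : ℕ) + 1))) * β ((i : ℕ) + 2)
          + γ ((i : ℕ) + 2)) *
        ∏ m ∈ Finset.Ico ((i : ℕ) + 2) (j : ℕ), (β (m + 1) / α (m + 1))) :
    (∀ j k : ℕ, 1 ≤ j → j + 1 < k → k ≤ n →
      g j ⬝ᵥ (genProd b (j + 1) k).mulVec hvec
        = (α (k - 1) / α (j + 1)) *
            ((δ j / α j + β j / (α (j - 1) * α j)) * β (j + 1) + γ (j + 1)) *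
            ∏ i ∈ Finset.Ico (j + 1) (k - 1), (β (i + 1) / α (i + 1))) ∧
    (∀ i j : Fin n, (i : ℕ) + 1 < (j : ℕ) →
      M i j = g ((i : ℕ) + 1) ⬝ᵥ (genProd b ((i : ℕ) + 2) ((j : ℕ) + 1)).mulVec hvec) ∧
    (∀ i j : Fin n, (j : ℕ) = (i : ℕ) + 1 →
      M i j = g ((i : ℕ) + 1) ⬝ᵥ hvec) :=
  wellfree_generators_M_general n t α β γ δ hα ht g hg b hb hvec hh M hM
end
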